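/- Let (B_t)_{t≥0} be a standard one-dimensional Brownian motion and let Ṽ : ℝ → ℝ be continuous with Ṽ(x) ≤ Ã for all x and Ṽ(x) ≤ −E|x| for all |x| ≥ x₀ (E > 0, x₀ ≥ 0). Let Ψ : ℝ → ℝ be continuous with ∫ Ψ(x)² dx = 1 and suppose that for some λ ∈ ℝ and all t > 0, x ∈ ℝ: Ψ(x) = e^{λ t} E[exp(∫₀^t Ṽ(x + B_s) ds) Ψ(x + B_t)]. Then for every R > 0 there exists a finite constant C₁ = C₁(R), depending only on R, E, Ã and x₀ (and not on Ψ or λ), such that, with t₀ := 2R/E, for all x ∈ ℝ: e^{R|x|} |Ψ(x)| ≤ C₁ e^{λ t₀}. -/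

import Mathlib

/-!
Outside `[-x₀, x₀]` the potential lies below `-E|y|` and inside below `Ã`, so `Ṽ ≤ A - E|y|`
everywhere for some constant `A`. Since `|x + B_s| ≥ |x| - |B_s|`, the Feynman–Kac weight of a
path started at `x` over the time `t₀ = 2R/E` is at most `e^{t₀ A - 2R|x|} e^{E ∫₀^{t₀} |B_s| ds}`.
Evaluating the eigenfunction equation at `t₀` and splitting the product by AM–GM,
`e^{-λ t₀} |Ψ(x)|` is at most `e^{t₀ A - 2R|x|}` times half of
`𝔼[e^{2E ∫₀^{t₀} |B_s| ds}] + 𝔼[Ψ(x + B_{t₀})²]`. The first expectation is bounded, by Jensen's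
inequality in time, through the Gaussian exponential moments of the `B_s`; the second is at most
`(2π t₀)^{-1/2} ‖Ψ‖₂² = (2π t₀)^{-1/2}` because the Gaussian density is bounded by its peak.
-/

open MeasureTheory ProbabilityTheory Real Filter

/-- Standard one-dimensional Brownian motion (started at 0): a.s. continuous paths,
independent increments, and Gaussian increments of variance `t - s`. -/
def IsBrownianMotion {Ω : Type} [MeasurableSpace Ω] (P : Measure Ω) (B : ℝ → Ω → ℝ) : Prop :=
  IsProbabilityMeasure P ∧
  (∀ t : ℝ, Measurable (B t)) ∧
  (∀ ω, B 0 ω = 0) ∧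
  (∀ ω, Continuous fun t => B t ω) ∧
  (∀ s t : ℝ, 0 ≤ s → s ≤ t →
    Measure.map (fun ω => B t ω - B s ω) P = gaussianReal 0 (Real.toNNReal (t - s))) ∧
  (∀ (n : ℕ) (t : Fin (n + 1) → ℝ), Monotone t → (∀ i, 0 ≤ t i) →
    iIndepFun
      (fun i : Fin n => fun ω => B (t i.succ) ω - B (t i.castSucc) ω) P)

open scoped NNReal ENNReal

lemma exp_intervalIntegral_le {T : ℝ} (hT : 0 < T) {u : ℝ → ℝ} (hu : Continuous u) :
    exp (∫ s in (0:ℝ)..T, u s) ≤ T⁻¹ * ∫ s in (0:ℝ)..T, exp (T * u s) := by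
  have hTu : Continuous fun s => T * u s := continuous_const.mul hu
  have h := convexOn_exp.map_set_average_le (μ := volume) (t := Set.uIoc 0 T)
    continuous_exp.continuousOn isClosed_univ (by simp [hT.ne']) (by simp)
    (ae_of_all _ fun _ => Set.mem_univ _) hTu.integrableOn_uIoc
    (continuous_exp.comp hTu).integrableOn_uIoc
  simpa only [interval_average_eq_div, intervalIntegral.integral_const_mul, sub_zero,
    mul_div_cancel_left₀ _ hT.ne', div_eq_inv_mul] using h

lemma lintegral_exp_intervalIntegral_le {Ω : Type*} [MeasurableSpace Ω] {P : Measure Ω}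
    [SFinite P] {T : ℝ} (hT : 0 < T) {X : ℝ → Ω → ℝ}
    (hXm : Measurable (Function.uncurry fun ω s => X s ω)) (hXc : ∀ ω, Continuous fun s => X s ω)
    {M : ℝ≥0∞} (hM : ∀ s ∈ Set.Ioc (0:ℝ) T, ∫⁻ ω, ENNReal.ofReal (exp (T * X s ω)) ∂P ≤ M) :
    ∫⁻ ω, ENNReal.ofReal (exp (∫ s in (0:ℝ)..T, X s ω)) ∂P ≤ M := by
  have hm : Measurable (Function.uncurry fun ω s => ENNReal.ofReal (exp (T * X s ω))) :=
    ENNReal.measurable_ofReal.comp (measurable_exp.comp (measurable_const.mul hXm))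
  have hjensen : ∀ ω, ENNReal.ofReal (exp (∫ s in (0:ℝ)..T, X s ω)) ≤
      ENNReal.ofReal T⁻¹ * ∫⁻ s in Set.Ioc 0 T, ENNReal.ofReal (exp (T * X s ω)) := fun ω => by
    have hcont : Continuous fun s => exp (T * X s ω) :=
      continuous_exp.comp (continuous_const.mul (hXc ω))
    rw [← ofReal_integral_eq_lintegral_ofReal hcont.integrableOn_Ioc
      (ae_of_all _ fun _ => (exp_pos _).le), ← ENNReal.ofReal_mul (by positivity),
      ← intervalIntegral.integral_of_le hT.le]
    exact ENNReal.ofReal_le_ofReal (exp_intervalIntegral_le hT (hXc ω))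
  calc ∫⁻ ω, ENNReal.ofReal (exp (∫ s in (0:ℝ)..T, X s ω)) ∂P
      ≤ ∫⁻ ω, (ENNReal.ofReal T⁻¹ *
          ∫⁻ s in Set.Ioc 0 T, ENNReal.ofReal (exp (T * X s ω))) ∂P := lintegral_mono hjensen
    _ = ENNReal.ofReal T⁻¹ *
          ∫⁻ s in Set.Ioc 0 T, ∫⁻ ω, ENNReal.ofReal (exp (T * X s ω)) ∂P := by
      rw [lintegral_const_mul _ (by exact hm.lintegral_prod_right'),
        lintegral_lintegral_swap (by exact hm.aemeasurable)]
    _ ≤ ENNReal.ofReal T⁻¹ * ∫⁻ _ in Set.Ioc 0 T, M :=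
      mul_le_mul_right (setLIntegral_mono measurable_const hM) _
    _ = M := by
      rw [setLIntegral_const, Real.volume_Ioc, sub_zero, mul_comm M, ← mul_assoc,
        ← ENNReal.ofReal_mul (by positivity), inv_mul_cancel₀ hT.ne', ENNReal.ofReal_one, one_mul]

lemma lintegral_exp_mul_abs_gaussianReal_le (c : ℝ) (v : ℝ≥0) :
    ∫⁻ y, ENNReal.ofReal (exp (c * |y|)) ∂gaussianReal 0 v ≤
      ENNReal.ofReal (2 * exp (v * c ^ 2 / 2)) := by
  have hmgf : ∀ t : ℝ, ∫⁻ y, ENNReal.ofReal (exp (t * y)) ∂gaussianReal 0 v =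
      ENNReal.ofReal (exp (v * t ^ 2 / 2)) := fun t => by
    rw [← ofReal_integral_eq_lintegral_ofReal (integrable_exp_mul_gaussianReal t)
      (ae_of_all _ fun _ => (exp_pos _).le), ← mgf, mgf_fun_id_gaussianReal]
    simp only [zero_mul, zero_add]
  have hsplit : ∀ y : ℝ, exp (c * |y|) ≤ exp (c * y) + exp (-c * y) := fun y => by
    rcases abs_choice y with h | h
    · rw [h]; linarith [exp_pos (-c * y)]
    · rw [h, mul_neg, ← neg_mul]; linarith [exp_pos (c * y)]
  have hmeas : Measurable fun y : ℝ => ENNReal.ofReal (exp (c * y)) := by fun_prop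
  calc ∫⁻ y, ENNReal.ofReal (exp (c * |y|)) ∂gaussianReal 0 v
      ≤ ∫⁻ y, (ENNReal.ofReal (exp (c * y)) + ENNReal.ofReal (exp (-c * y))) ∂gaussianReal 0 v :=
        lintegral_mono fun y => (ENNReal.ofReal_le_ofReal (hsplit y)).trans ENNReal.ofReal_add_le
    _ = ENNReal.ofReal (2 * exp (v * c ^ 2 / 2)) := by
      rw [lintegral_add_left hmeas, hmgf, hmgf, neg_sq, ← ENNReal.ofReal_add (by positivity)
        (by positivity), two_mul]

lemma gaussianPDF_le (μ : ℝ) (v : ℝ≥0) (x : ℝ) :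
    gaussianPDF μ v x ≤ ENNReal.ofReal (√(2 * π * v))⁻¹ := by
  refine ENNReal.ofReal_le_ofReal ?_
  rw [gaussianPDFReal]
  refine mul_le_of_le_one_right (by positivity) (exp_le_one_iff.2 ?_)
  exact div_nonpos_of_nonpos_of_nonneg (neg_nonpos.2 (sq_nonneg _)) (by positivity)

lemma lintegral_gaussianReal_le {v : ℝ≥0} (hv : v ≠ 0) (μ : ℝ) (f : ℝ → ℝ≥0∞) :
    ∫⁻ y, f y ∂gaussianReal μ v ≤ ENNReal.ofReal (√(2 * π * v))⁻¹ * ∫⁻ y, f y := by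
  rw [gaussianReal_of_var_ne_zero _ hv, ← lintegral_const_mul' _ _ ENNReal.ofReal_ne_top]
  exact (lintegral_withDensity_le_lintegral_mul _ (measurable_gaussianPDF _ _) f).trans
    (lintegral_mono fun y => mul_le_mul_left (gaussianPDF_le μ v y) _)

lemma intervalIntegral_comp_add_le {V : ℝ → ℝ} (hV : Continuous V) {A E : ℝ} (hE : 0 ≤ E)
    (hVA : ∀ y, V y ≤ A - E * |y|) {b : ℝ → ℝ} (hb : Continuous b) {t : ℝ} (ht : 0 ≤ t)
    (x : ℝ) :
    ∫ s in (0:ℝ)..t, V (x + b s) ≤ t * (A - E * |x|) + E * ∫ s in (0:ℝ)..t, |b s| := by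
  have hpt : ∀ s, V (x + b s) ≤ A - E * |x| + E * |b s| := fun s => by
    have htri : |x| ≤ |x + b s| + |b s| := by
      simpa using abs_sub (x + b s) (b s)
    nlinarith [hVA (x + b s)]
  have hrhs : Continuous fun s => A - E * |x| + E * |b s| := by fun_prop
  calc ∫ s in (0:ℝ)..t, V (x + b s)
      ≤ ∫ s in (0:ℝ)..t, (A - E * |x| + E * |b s|) :=
        intervalIntegral.integral_mono_on ht ((hV.comp (by fun_prop)).intervalIntegrable _ _)
          (hrhs.intervalIntegrable _ _) fun s _ => hpt s
    _ = t * (A - E * |x|) + E * ∫ s in (0:ℝ)..t, |b s| := by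
      rw [intervalIntegral.integral_add (f := fun _ => A - E * |x|) (g := fun s => E * |b s|)
          intervalIntegrable_const ((continuous_const.mul hb.abs).intervalIntegrable _ _),
        intervalIntegral.integral_const, intervalIntegral.integral_const_mul, sub_zero, smul_eq_mul]

lemma abs_integral_le_of_abs_le_mul {Ω : Type*} [MeasurableSpace Ω] {P : Measure Ω}
    {F f g : Ω → ℝ} {k a b : ℝ} (hk : 0 ≤ k) (ha : 0 ≤ a) (hb : 0 ≤ b) (hg : Measurable g)
    (hF : ∀ ω, |F ω| ≤ k * (f ω * g ω))
    (hfa : ∫⁻ ω, ENNReal.ofReal (f ω ^ 2) ∂P ≤ ENNReal.ofReal a)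
    (hgb : ∫⁻ ω, ENNReal.ofReal (g ω ^ 2) ∂P ≤ ENNReal.ofReal b) :
    |∫ ω, F ω ∂P| ≤ k * (a + b) / 2 := by
  have hamgm : ∀ ω, ENNReal.ofReal ‖F ω‖ ≤
      ENNReal.ofReal (k / 2) * (ENNReal.ofReal (f ω ^ 2) + ENNReal.ofReal (g ω ^ 2)) := fun ω => by
    rw [← ENNReal.ofReal_add (sq_nonneg _) (sq_nonneg _), ← ENNReal.ofReal_mul (by positivity),
      Real.norm_eq_abs]
    refine ENNReal.ofReal_le_ofReal ((hF ω).trans ?_)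
    nlinarith [two_mul_le_add_sq (f ω) (g ω)]
  have hlint : ∫⁻ ω, ENNReal.ofReal ‖F ω‖ ∂P ≤ ENNReal.ofReal (k * (a + b) / 2) := by
    calc ∫⁻ ω, ENNReal.ofReal ‖F ω‖ ∂P
        ≤ ENNReal.ofReal (k / 2) *
            (∫⁻ ω, ENNReal.ofReal (f ω ^ 2) ∂P + ∫⁻ ω, ENNReal.ofReal (g ω ^ 2) ∂P) := by
          rw [← lintegral_add_right _ (by fun_prop),
            ← lintegral_const_mul' _ _ ENNReal.ofReal_ne_top]
          exact lintegral_mono hamgm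
      _ ≤ ENNReal.ofReal (k / 2) * (ENNReal.ofReal a + ENNReal.ofReal b) := by gcongr
      _ = ENNReal.ofReal (k * (a + b) / 2) := by
          rw [← ENNReal.ofReal_add ha hb, ← ENNReal.ofReal_mul (by positivity)]
          ring_nf
  rw [← Real.norm_eq_abs]
  exact (norm_integral_le_lintegral_norm F).trans
    (ENNReal.toReal_le_of_le_ofReal (by positivity) hlint)

lemma le_max_add_mul_sub_mul_abs {V : ℝ → ℝ} {A E x₀ : ℝ} (hE : 0 ≤ E) (hx₀ : 0 ≤ x₀)
    (hVA : ∀ y, V y ≤ A) (hdecay : ∀ y, x₀ ≤ |y| → V y ≤ -E * |y|) (y : ℝ) :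
    V y ≤ max A 0 + E * x₀ - E * |y| := by
  rcases le_or_gt x₀ |y| with h | h
  · nlinarith [hdecay y h, le_max_right A 0]
  · nlinarith [hVA y, le_max_left A 0]

namespace IsBrownianMotion

variable {Ω : Type} [MeasurableSpace Ω] {P : Measure Ω} {B : ℝ → Ω → ℝ}

lemma map_eq_gaussianReal (hB : IsBrownianMotion P B) {t : ℝ} (ht : 0 ≤ t) :
    P.map (B t) = gaussianReal 0 t.toNNReal := by
  have ⟨_, _, hB0, _, hBinc, _⟩ := hB
  simpa only [hB0, sub_zero] using hBinc 0 t le_rfl ht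

lemma measurable_uncurry (hB : IsBrownianMotion P B) :
    Measurable (Function.uncurry fun ω s => B s ω) :=
  let ⟨_, hBm, _, hBc, _⟩ := hB
  (measurable_uncurry_of_continuous_of_measurable hBc hBm).comp measurable_swap

lemma lintegral_comp_add_le (hB : IsBrownianMotion P B) {t : ℝ} (ht : 0 < t) (x : ℝ)
    {f : ℝ → ℝ≥0∞} (hf : Measurable f) :
    ∫⁻ ω, f (x + B t ω) ∂P ≤ ENNReal.ofReal (√(2 * π * t))⁻¹ * ∫⁻ y, f y := by
  have ⟨_, hBm, _⟩ := hB
  rw [← lintegral_map (f := fun y => f (x + y)) (hf.comp (measurable_const_add x)) (hBm t),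
    hB.map_eq_gaussianReal ht.le, ← lintegral_add_left_eq_self f x]
  simpa only [Real.coe_toNNReal _ ht.le] using
    lintegral_gaussianReal_le (Real.toNNReal_pos.2 ht).ne' 0 fun y => f (x + y)

lemma lintegral_exp_mul_integral_abs_le (hB : IsBrownianMotion P B) {t : ℝ} (ht : 0 < t)
    (c : ℝ) :
    ∫⁻ ω, ENNReal.ofReal (exp (c * ∫ s in (0:ℝ)..t, |B s ω|)) ∂P ≤
      ENNReal.ofReal (2 * exp (t * (t * c) ^ 2 / 2)) := by
  have ⟨_, hBm, _, hBc, _⟩ := hB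
  simp_rw [← intervalIntegral.integral_const_mul]
  refine lintegral_exp_intervalIntegral_le (X := fun s ω => c * |B s ω|) ht
    (measurable_const.mul hB.measurable_uncurry.abs)
    (fun ω => continuous_const.mul (hBc ω).abs) fun s hs => ?_
  simp only [← mul_assoc]
  rw [← lintegral_map (f := fun y => ENNReal.ofReal (exp (t * c * |y|))) (by fun_prop) (hBm s),
    hB.map_eq_gaussianReal hs.1.le]
  refine (lintegral_exp_mul_abs_gaussianReal_le _ _).trans (ENNReal.ofReal_le_ofReal ?_)
  gcongr
  rw [Real.coe_toNNReal _ hs.1.le]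
  exact hs.2

lemma abs_integral_feynmanKac_le (hB : IsBrownianMotion P B) {V : ℝ → ℝ} (hV : Continuous V)
    {A E : ℝ} (hE : 0 ≤ E) (hVA : ∀ y, V y ≤ A - E * |y|) {Ψ : ℝ → ℝ} (hΨ : Continuous Ψ)
    (hΨ2 : ∫ y, Ψ y ^ 2 = 1) {t : ℝ} (ht : 0 < t) (x : ℝ) :
    |∫ ω, exp (∫ s in (0:ℝ)..t, V (x + B s ω)) * Ψ (x + B t ω) ∂P| ≤
      exp (t * (A - E * |x|)) * (2 * exp (t * (t * (2 * E)) ^ 2 / 2) + (√(2 * π * t))⁻¹) / 2 := by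
  have ⟨_, hBm, _, hBc, _⟩ := hB
  have hΨ2' : ∫⁻ y, ENNReal.ofReal (Ψ y ^ 2) = 1 := by
    rw [← ofReal_integral_eq_lintegral_ofReal (.of_integral_ne_zero (by simp [hΨ2]))
      (ae_of_all _ fun _ => sq_nonneg _), hΨ2, ENNReal.ofReal_one]
  refine abs_integral_le_of_abs_le_mul (f := fun ω => exp (E * ∫ s in (0:ℝ)..t, |B s ω|))
    (g := fun ω => |Ψ (x + B t ω)|) (exp_pos _).le (by positivity) (by positivity)
    (hΨ.measurable.comp (measurable_const.add (hBm t))).abs (fun ω => ?_) ?_ ?_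
  · rw [abs_mul, abs_of_pos (exp_pos _), ← mul_assoc, ← exp_add]
    gcongr
    linarith [intervalIntegral_comp_add_le hV hE hVA (hBc ω) ht.le x]
  · simp_rw [← exp_nat_mul, Nat.cast_ofNat, ← mul_assoc 2 E]
    exact hB.lintegral_exp_mul_integral_abs_le ht (2 * E)
  · simp_rw [sq_abs]
    refine (hB.lintegral_comp_add_le ht x (f := fun y => ENNReal.ofReal (Ψ y ^ 2))
      (ENNReal.measurable_ofReal.comp (hΨ.measurable.pow_const 2))).trans_eq ?_
    rw [hΨ2', mul_one]

end IsBrownianMotion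

/-- Proposition 3.4(ii), `eq:boundPsik2`: exponential spatial decay, of any
rate `R`, for L²-normalized eigenfunctions of the Feynman–Kac semigroup, with a constant
`C₁ = C₁(R)` depending only on `R, E, Ã, x₀` (and not on `Ψ` or `λ`). -/
theorem eigenfunction_exponential_decay
    {Ω : Type} [MeasurableSpace Ω] (P : Measure Ω) (B : ℝ → Ω → ℝ)
    (hB : IsBrownianMotion P B)
    (Vt : ℝ → ℝ) (Atil E x₀ : ℝ) (hVc : Continuous Vt) (hVb : ∀ x, Vt x ≤ Atil)
    (hE : 0 < E) (hx₀ : 0 ≤ x₀) (hdecay : ∀ x : ℝ, x₀ ≤ |x| → Vt x ≤ -E * |x|) :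
    ∀ R : ℝ, 0 < R → ∃ C₁ : ℝ,
      ∀ (Ψ : ℝ → ℝ) (lam : ℝ), Continuous Ψ → (∫ x : ℝ, (Ψ x) ^ 2) = 1 →
        (∀ t : ℝ, 0 < t → ∀ x : ℝ,
          Ψ x = Real.exp (lam * t) *
            ∫ ω, Real.exp (∫ s in (0:ℝ)..t, Vt (x + B s ω)) * Ψ (x + B t ω) ∂P) →
        ∀ x : ℝ, Real.exp (R * |x|) * |Ψ x| ≤ C₁ * Real.exp (lam * (2 * R / E)) := by
  intro R hR
  set t₀ := 2 * R / E
  have ht₀ : 0 < t₀ := by positivity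
  set A := max Atil 0 + E * x₀
  set M := 2 * exp (t₀ * (t₀ * (2 * E)) ^ 2 / 2) + (√(2 * π * t₀))⁻¹
  refine ⟨exp (t₀ * A) * M / 2, fun Ψ lam hΨ hΨ2 heig x => ?_⟩
  have hFK := hB.abs_integral_feynmanKac_le hVc hE.le
    (le_max_add_mul_sub_mul_abs hE.le hx₀ hVb hdecay) hΨ hΨ2 ht₀ x
  -- `t₀ = 2R/E` makes the decay `e^{-E t₀ |x|} = e^{-2R|x|}` of the weight beat `e^{R|x|}`
  have hweight : exp (R * |x|) * exp (t₀ * (A - E * |x|)) ≤ exp (t₀ * A) := by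
    rw [← exp_add, exp_le_exp]
    have hEt₀ : t₀ * E = 2 * R := div_mul_cancel₀ _ hE.ne'
    nlinarith [abs_nonneg x]
  calc exp (R * |x|) * |Ψ x|
      = exp (lam * t₀) * (exp (R * |x|) * |∫ ω, exp (∫ s in (0:ℝ)..t₀, Vt (x + B s ω)) *
          Ψ (x + B t₀ ω) ∂P|) := by
        rw [heig t₀ ht₀ x, abs_mul, abs_of_pos (exp_pos _)]; ring
    _ ≤ exp (lam * t₀) * (exp (R * |x|) * (exp (t₀ * (A - E * |x|)) * M / 2)) := by gcongr
    _ = exp (lam * t₀) * (exp (R * |x|) * exp (t₀ * (A - E * |x|))) * (M / 2) := by ring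
    _ ≤ exp (lam * t₀) * exp (t₀ * A) * (M / 2) := by gcongr exp (lam * t₀) * ?_ * (M / 2)
    _ = exp (t₀ * A) * M / 2 * exp (lam * t₀) := by ring
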